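/- Let b_{2k} = b_{2k+1} = 4^{−k}·binomial(2k,k) and d_{2k} = d_{2k+1} = (69/100)_k / k! (Pochhammer rising factorial), and define I(x) = Σ_{k=0}^{21} (b_k − (b_{22}/d_{22})·d_k)·cos(kx). Then I(x) > 1.5 for all x ∈ (0, 0.1]. -/
import Mathlib


open Real

noncomputable def b (k : ℕ) : ℝ := (Nat.choose (2*(k/2)) (k/2) : ℝ) / 4^(k/2)

noncomputable def d (k : ℕ) : ℝ :=
  (∏ i ∈ Finset.range (k/2), ((69:ℝ)/100 + i)) / Nat.factorial (k/2)

noncomputable def I (x : ℝ) : ℝ :=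
  ∑ k ∈ Finset.range 22, (b k - (b 22 / d 22) * d k) * cos (k * x)

set_option maxHeartbeats 2000000 in
lemma hr : b 22 / d 22 = 854492187500000000000/1820666467146366230521 := by
  norm_num [b, d, Finset.prod_range_succ, Nat.factorial, Nat.choose]

set_option maxHeartbeats 4000000 in
theorem lemma11 : ∀ x ∈ Set.Ioc (0 : ℝ) 0.1, I x > 1.5 := by
  rintro x ⟨hx0, hx1⟩
  have hx1' : x ≤ 0.1 := hx1
  have hcos : ∀ k ∈ Finset.range 22,
      (b k - (b 22 / d 22) * d k) * (1 - ((k:ℝ)/10)^2/2)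
      ≤ (b k - (b 22 / d 22) * d k) * Real.cos (k*x) := by
    intro k hk
    have hc : 0 ≤ b k - (b 22 / d 22) * d k := by
      rw [hr]
      fin_cases hk <;>
        norm_num [b, d, Finset.prod_range_succ, Nat.choose, Nat.factorial]
    apply mul_le_mul_of_nonneg_left _ hc
    have h1 : 1 - ((k:ℝ)*x)^2/2 ≤ Real.cos ((k:ℝ)*x) := Real.one_sub_sq_div_two_le_cos
    have hk0 : (0:ℝ) ≤ (k:ℝ) := Nat.cast_nonneg k
    have hx2 : x^2 ≤ (1:ℝ)/100 := by nlinarith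
    have h2 : ((k:ℝ)*x)^2 ≤ ((k:ℝ)/10)^2 := by
      have := mul_nonneg (sq_nonneg (k:ℝ)) (by linarith : (0:ℝ) ≤ 1/100 - x^2)
      nlinarith
    linarith
  have hsum := Finset.sum_le_sum hcos
  have hval : ∑ k ∈ Finset.range 22,
      (b k - (b 22 / d 22) * d k) * (1 - ((k:ℝ)/10)^2/2) > 1.5 := by
    rw [hr]
    norm_num [Finset.sum_range_succ, b, d, Finset.prod_range_succ, Nat.choose, Nat.factorial]
  unfold I
  linarith
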